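/- arXiv:1706.00663 — 5 statements merged into one kernel-verified Lean document; each statement's English description precedes it below -/
import Mathlib

section
/- Let X be a complex Banach space, T a bounded linear operator on X, and λ an eigenvalue of T such that T − λI is a Browder operator with ascent p, i.e., T − λI has closed range, dim ker(T − λI) = dim ker(T* − λI) < ∞, and ker((T − λI)^p) = ker((T − λI)^{p+1}) as well as range((T − λI)^p) = range((T − λI)^{p+1}). Then X decomposes as the direct sum X = ker((T − λI)^p) ⊕ range((T − λI)^p); moreover, the operator P = Φ(Φ*Φ)^{-1}Φ* built from bases of the generalized eigenspaces is a continuous projection with range(P) = ker((T − λI)^p) and ker(P) = range((T − λI)^p). -/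
/-- The dual (transpose) operator `T* : X* → X*`, `T* f = f ∘ T`, of a bounded operator `T`
on a normed space `X`. -/
noncomputable def dualOp {X : Type*} [NormedAddCommGroup X] [NormedSpace ℂ X]
    (T : X →L[ℂ] X) : StrongDual ℂ X →L[ℂ] StrongDual ℂ X :=
  (ContinuousLinearMap.compL ℂ X X ℂ).flip T

/-!
Write `A = T - λ`. Descent gives `X = ker A^p + range A^p`: if `A^p x = A^(2p) y`, then
`x - A^p y ∈ ker A^p`. Every `e*_j` vanishes on `range A^p`, so a combination `∑ c_j e*_j` that
annihilates the basis `e` vanishes on all of `X`; hence `c = 0` and the Gram matrix is invertible.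
Invertibility of `G` in turn forces `ker A^p ∩ range A^p = 0`, and `P`, which fixes `ker A^p`
and kills `range A^p`, is the projection of the resulting direct sum.
-/

namespace LinearMap

variable {R M : Type*} [Ring R] [AddCommGroup M] [Module R M] {f : Module.End R M} {p : ℕ}

theorem range_pow_add_eq_of_range_pow_succ_eq (h : range (f ^ p) = range (f ^ (p + 1))) (k : ℕ) :
    range (f ^ (p + k)) = range (f ^ p) := by
  induction k with
  | zero => rfl
  | succ k ih =>
    rw [← add_assoc, pow_succ', Module.End.mul_eq_comp, range_comp, ih, ← range_comp,
      ← Module.End.mul_eq_comp, ← pow_succ', h]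

theorem codisjoint_ker_pow_range_pow_of_range_pow_succ_eq
    (h : range (f ^ p) = range (f ^ (p + 1))) :
    Codisjoint (ker (f ^ p)) (range (f ^ p)) := by
  refine codisjoint_iff.mpr (Submodule.eq_top_iff'.mpr fun x => ?_)
  obtain ⟨y, hy⟩ : (f ^ p) x ∈ range (f ^ (p + p)) :=
    (range_pow_add_eq_of_range_pow_succ_eq h p).symm ▸ mem_range_self _ x
  rw [pow_add, Module.End.mul_apply] at hy
  exact Submodule.mem_sup.mpr ⟨x - (f ^ p) y, by simp [hy], (f ^ p) y, mem_range_self _ y, by abel⟩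

end LinearMap

section DualGram

open Matrix

variable {K V ι : Type*} [Field K] [AddCommGroup V] [Module K V] [Fintype ι]

/-- With `Φ = (v i)ᵢ` and `Φ* = (φ j)ⱼ`, this is `G = Φ*Φ`; `dualGramProjection` is `Φ G⁻¹ Φ*`. -/
def dualGramMatrix (φ : ι → Module.Dual K V) (v : ι → V) : Matrix ι ι K :=
  Matrix.of fun j i => φ j (v i)

noncomputable def dualGramProjection [DecidableEq ι] (φ : ι → Module.Dual K V) (v : ι → V) :
    V →ₗ[K] V :=
  ∑ i, ∑ j, (dualGramMatrix φ v)⁻¹ i j • (φ j).smulRight (v i)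

theorem dualGramProjection_apply [DecidableEq ι] (φ : ι → Module.Dual K V) (v : ι → V) (x : V) :
    dualGramProjection φ v x = ∑ i, ((dualGramMatrix φ v)⁻¹ *ᵥ fun j => φ j x) i • v i := by
  simp [dualGramProjection, mulVec, dotProduct, Finset.sum_smul, smul_smul]

variable {E R : Submodule K V} (e : Module.Basis ι K E) {φ : ι → Module.Dual K V}

theorem Module.Basis.sum_repr_smul_coe (v : E) : ∑ i, e.repr v i • (e i : V) = v := by
  conv_rhs => rw [← e.sum_repr v]
  simp only [Submodule.coe_sum, Submodule.coe_smul]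

theorem dualGramMatrix_mulVec_repr (v : E) :
    dualGramMatrix φ (fun i => (e i : V)) *ᵥ e.repr v = fun j => φ j v := by
  funext j
  rw [← e.sum_repr_smul_coe v, map_sum]
  simp [dualGramMatrix, mulVec, dotProduct, mul_comm]

theorem isUnit_dualGramMatrix [DecidableEq ι] (hER : Codisjoint E R)
    (hφR : ∀ j, R ≤ LinearMap.ker (φ j)) (hφ : LinearIndependent K φ) :
    IsUnit (dualGramMatrix φ fun i => (e i : V)) := by
  rw [Matrix.isUnit_iff_isUnit_det, isUnit_iff_ne_zero, Ne, ← Matrix.exists_vecMul_eq_zero_iff]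
  rintro ⟨c, hc, hcG⟩
  have hE : Set.EqOn ⇑(∑ j, c j • φ j) ⇑(0 : Module.Dual K V) E := fun v hv => by
    have := congrArg (c ⬝ᵥ ·) (dualGramMatrix_mulVec_repr e (φ := φ) ⟨v, hv⟩)
    rw [dotProduct_mulVec, hcG, zero_dotProduct] at this
    simpa [dotProduct] using this.symm
  have hR : Set.EqOn ⇑(∑ j, c j • φ j) ⇑(0 : Module.Dual K V) R := fun x hx => by
    simp [fun j => LinearMap.mem_ker.mp (hφR j hx)]
  exact hc (funext (Fintype.linearIndependent_iff.mp hφ c (LinearMap.ext_on_codisjoint hER hE hR)))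

theorem disjoint_of_isUnit_dualGramMatrix [DecidableEq ι]
    (hG : IsUnit (dualGramMatrix φ fun i => (e i : V))) (hφR : ∀ j, R ≤ LinearMap.ker (φ j)) :
    Disjoint E R := by
  refine Submodule.disjoint_def.mpr fun v hvE hvR => ?_
  have hrepr : ⇑(e.repr ⟨v, hvE⟩) = 0 := (mulVec_injective_iff_isUnit.mpr hG) <| by
    rw [dualGramMatrix_mulVec_repr e ⟨v, hvE⟩, mulVec_zero]
    exact funext fun j => hφR j hvR
  simpa using e.repr.map_eq_zero_iff.mp (DFunLike.coe_injective hrepr)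

theorem dualGramProjection_eq_projection [DecidableEq ι] (hER : IsCompl E R)
    (hG : IsUnit (dualGramMatrix φ fun i => (e i : V))) (hφR : ∀ j, R ≤ LinearMap.ker (φ j)) :
    dualGramProjection φ (fun i => (e i : V)) = E.projection R hER := by
  refine LinearMap.ext_on_codisjoint hER.codisjoint (fun v hv => ?_) (fun x hx => ?_)
  · have hdet := (isUnit_iff_isUnit_det _).mp hG
    rw [Submodule.projection_apply_of_mem_left hER hv, dualGramProjection_apply,
      ← dualGramMatrix_mulVec_repr e ⟨v, hv⟩, mulVec_mulVec, nonsing_inv_mul _ hdet, one_mulVec]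
    exact e.sum_repr_smul_coe ⟨v, hv⟩
  · have hφx : (fun j => φ j x) = 0 := funext fun j => hφR j hx
    rw [Submodule.projection_apply_of_mem_right hER hx, dualGramProjection_apply, hφx, mulVec_zero]
    simp

end DualGram

section DualOp

variable {X : Type*} [NormedAddCommGroup X] [NormedSpace ℂ X]

theorem Module.Basis.linearIndependent_toLinearMap {ι : Type*} {D : Submodule ℂ (StrongDual ℂ X)}
    (b : Module.Basis ι ℂ D) : LinearIndependent ℂ fun j => ((b j : StrongDual ℂ X) : X →ₗ[ℂ] ℂ) :=
  (b.linearIndependent.map_injOn D.subtype Subtype.val_injective.injOn).map_injOn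
    (ContinuousLinearMap.coeLM ℂ) ContinuousLinearMap.coe_injective.injOn

theorem dualOp_apply_apply (S : X →L[ℂ] X) (f : StrongDual ℂ X) (x : X) :
    dualOp S f x = f (S x) := rfl

theorem dualOp_sub_smul_one (T : X →L[ℂ] X) (l : ℂ) : dualOp T - l • 1 = dualOp (T - l • 1) := by
  ext f x
  simp only [sub_apply, smul_apply, one_apply_eq_self, dualOp_apply_apply, map_sub,
    map_smul]

theorem dualOp_pow (S : X →L[ℂ] X) (k : ℕ) : dualOp S ^ k = dualOp (S ^ k) := by
  induction k with
  | zero => rfl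
  | succ k ih => rw [pow_succ (dualOp S) k, ih, pow_succ' S k]; rfl

theorem range_pow_le_ker_of_dualOp_pow_apply_eq_zero {S : X →L[ℂ] X} {k : ℕ} {f : StrongDual ℂ X}
    (hf : (dualOp S ^ k) f = 0) :
    LinearMap.range ((S ^ k : X →L[ℂ] X) : X →ₗ[ℂ] X) ≤ LinearMap.ker (f : X →ₗ[ℂ] ℂ) := by
  rintro _ ⟨x, rfl⟩
  rw [dualOp_pow] at hf
  exact DFunLike.congr_fun hf x

end DualOp

theorem browder_space_decomposition_general
    {X : Type*} [NormedAddCommGroup X] [NormedSpace ℂ X]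
    (T : X →L[ℂ] X) (l : ℂ) (p n : ℕ)
    (hdesc : LinearMap.range (((T - l • 1) ^ p : X →L[ℂ] X) : X →ₗ[ℂ] X) = LinearMap.range (((T - l • 1) ^ (p + 1) : X →L[ℂ] X) : X →ₗ[ℂ] X))
    (e : Module.Basis (Fin n) ℂ (LinearMap.ker (((T - l • 1) ^ p : X →L[ℂ] X) : X →ₗ[ℂ] X)))
    (estar : Module.Basis (Fin n) ℂ (LinearMap.ker (((dualOp T - l • 1) ^ p :
      StrongDual ℂ X →L[ℂ] StrongDual ℂ X) : StrongDual ℂ X →ₗ[ℂ] StrongDual ℂ X)))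
    (G : Matrix (Fin n) (Fin n) ℂ)
    (hG : G = Matrix.of fun j i => (estar j : StrongDual ℂ X) (e i : X))
    (P : X →L[ℂ] X)
    (hP : P = ∑ i : Fin n, ∑ j : Fin n,
      (G⁻¹ i j) • ((estar j : StrongDual ℂ X).smulRight (e i : X))) :
    IsCompl (LinearMap.ker (((T - l • 1) ^ p : X →L[ℂ] X) : X →ₗ[ℂ] X)) (LinearMap.range (((T - l • 1) ^ p : X →L[ℂ] X) : X →ₗ[ℂ] X)) ∧
    IsUnit G ∧
    P ∘L P = P ∧
    LinearMap.range (P : X →ₗ[ℂ] X) = LinearMap.ker (((T - l • 1) ^ p : X →L[ℂ] X) : X →ₗ[ℂ] X) ∧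
    LinearMap.ker (P : X →ₗ[ℂ] X) = LinearMap.range (((T - l • 1) ^ p : X →L[ℂ] X) : X →ₗ[ℂ] X) := by
  set φ : Fin n → Module.Dual ℂ X := fun j => ((estar j : StrongDual ℂ X) : X →ₗ[ℂ] ℂ)
  have hφ : LinearIndependent ℂ φ := estar.linearIndependent_toLinearMap
  have hφR (j : Fin n) := range_pow_le_ker_of_dualOp_pow_apply_eq_zero
    (dualOp_sub_smul_one T l ▸ (estar j).2 : (dualOp (T - l • 1) ^ p) (estar j) = 0)
  have hcod : Codisjoint (LinearMap.ker (((T - l • 1) ^ p : X →L[ℂ] X) : X →ₗ[ℂ] X))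
      (LinearMap.range (((T - l • 1) ^ p : X →L[ℂ] X) : X →ₗ[ℂ] X)) := by
    simpa only [ContinuousLinearMap.toLinearMap_pow] using
      LinearMap.codisjoint_ker_pow_range_pow_of_range_pow_succ_eq
        (by simpa only [ContinuousLinearMap.toLinearMap_pow] using hdesc)
  have hGgram : G = dualGramMatrix φ fun i => (e i : X) := hG
  have hGunit := isUnit_dualGramMatrix e hcod hφR hφ
  have hcompl : IsCompl _ _ := ⟨disjoint_of_isUnit_dualGramMatrix e hGunit hφR, hcod⟩
  have hPgram : (P : X →ₗ[ℂ] X) = dualGramProjection φ fun i => (e i : X) := by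
    ext x
    simp [hP, ← hGgram, dualGramProjection, φ]
  have hPproj : (P : X →ₗ[ℂ] X) = Submodule.projection _ _ hcompl := by
    rw [hPgram, dualGramProjection_eq_projection e hcompl hGunit hφR]
  refine ⟨hcompl, hGgram ▸ hGunit, ContinuousLinearMap.coe_injective ?_,
    by simp [hPproj], by simp [hPproj]⟩
  rw [ContinuousLinearMap.toLinearMap_comp, hPproj]
  exact (Submodule.isIdempotentElem_projection hcompl).eq

/-- **space decomposition.** If `λ` is an eigenvalue of `T` such that
`T - λI` is a Browder operator with ascent `p`, then
`X = ker (T - λI)^p ⊕ range (T - λI)^p`; moreover the Gram matrix `G` built from bases of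
the generalized eigenspaces of `T` and `T*` is invertible and
`P = Φ (Φ*Φ)⁻¹ Φ*` is a continuous projection with range `ker (T - λI)^p` and kernel
`range (T - λI)^p`. -/
theorem browder_space_decomposition
    {X : Type*} [NormedAddCommGroup X] [NormedSpace ℂ X] [CompleteSpace X]
    (T : X →L[ℂ] X) (l : ℂ) (p n : ℕ) (hp : 0 < p)
    (heig : LinearMap.ker ((T - l • 1 : X →L[ℂ] X) : X →ₗ[ℂ] X) ≠ ⊥)
    (hclosed : IsClosed (LinearMap.range ((T - l • 1 : X →L[ℂ] X) : X →ₗ[ℂ] X) : Set X))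
    (hfin : FiniteDimensional ℂ (LinearMap.ker ((T - l • 1 : X →L[ℂ] X) : X →ₗ[ℂ] X)))
    (hfin' : FiniteDimensional ℂ (LinearMap.ker ((dualOp T - l • 1 : StrongDual ℂ X →L[ℂ] StrongDual ℂ X) :
        StrongDual ℂ X →ₗ[ℂ] StrongDual ℂ X)))
    (hdim : Module.finrank ℂ (LinearMap.ker ((T - l • 1 : X →L[ℂ] X) : X →ₗ[ℂ] X)) =
      Module.finrank ℂ (LinearMap.ker ((dualOp T - l • 1 : StrongDual ℂ X →L[ℂ] StrongDual ℂ X) :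
        StrongDual ℂ X →ₗ[ℂ] StrongDual ℂ X)))
    (hasc : LinearMap.ker (((T - l • 1) ^ p : X →L[ℂ] X) : X →ₗ[ℂ] X) = LinearMap.ker (((T - l • 1) ^ (p + 1) : X →L[ℂ] X) : X →ₗ[ℂ] X))
    (hdesc : LinearMap.range (((T - l • 1) ^ p : X →L[ℂ] X) : X →ₗ[ℂ] X) = LinearMap.range (((T - l • 1) ^ (p + 1) : X →L[ℂ] X) : X →ₗ[ℂ] X))
    (e : Module.Basis (Fin n) ℂ (LinearMap.ker (((T - l • 1) ^ p : X →L[ℂ] X) : X →ₗ[ℂ] X)))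
    (estar : Module.Basis (Fin n) ℂ (LinearMap.ker (((dualOp T - l • 1) ^ p :
      StrongDual ℂ X →L[ℂ] StrongDual ℂ X) : StrongDual ℂ X →ₗ[ℂ] StrongDual ℂ X)))
    (G : Matrix (Fin n) (Fin n) ℂ)
    (hG : G = Matrix.of fun j i => (estar j : StrongDual ℂ X) (e i : X))
    (P : X →L[ℂ] X)
    (hP : P = ∑ i : Fin n, ∑ j : Fin n,
      (G⁻¹ i j) • ((estar j : StrongDual ℂ X).smulRight (e i : X))) :
    IsCompl (LinearMap.ker (((T - l • 1) ^ p : X →L[ℂ] X) : X →ₗ[ℂ] X)) (LinearMap.range (((T - l • 1) ^ p : X →L[ℂ] X) : X →ₗ[ℂ] X)) ∧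
    IsUnit G ∧
    P ∘L P = P ∧
    LinearMap.range (P : X →ₗ[ℂ] X) = LinearMap.ker (((T - l • 1) ^ p : X →L[ℂ] X) : X →ₗ[ℂ] X) ∧
    LinearMap.ker (P : X →ₗ[ℂ] X) = LinearMap.range (((T - l • 1) ^ p : X →L[ℂ] X) : X →ₗ[ℂ] X) :=
  browder_space_decomposition_general T l p n hdesc e estar G hG P hP
end

section
/- Let X be a complex Banach space, T a bounded linear operator on X, and λ an eigenvalue of T such that (T − λI)^p has closed range, 0 < dim ker((T − λI)^p) = n ≤ m = dim ker((T* − λI)^p) < ∞, and ker((T − λI)^p) = ker((T − λI)^{p+1}) (finite ascent p). Let A ∈ ℂ^{n×m} be the Moore–Penrose left inverse of the Gram matrix G (so A·G = I_n). Then the finite-rank operator P defined by Px = Σ_{i=1}^{n} Σ_{j=1}^{m} a_{ij} e*_j(x) e_i is a continuous projection of X onto the closed subspace ker((T − λI)^p). -/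
open Submodule Set

theorem Module.Basis.span_coe_eq {R M ι : Type*} [Semiring R] [AddCommMonoid M] [Module R M]
    {K : Submodule R M} (b : Module.Basis ι R K) : span R (range fun i => (b i : M)) = K := by
  rw [show (fun i => (b i : M)) = K.subtype ∘ b from rfl, range_comp, ← map_span, b.span_eq,
    map_subtype_top]

section FiniteRankOfMatrix

variable {R M ι κ : Type*} [CommSemiring R] [TopologicalSpace R] [AddCommMonoid M] [Module R M]
  [TopologicalSpace M] [ContinuousAdd M] [ContinuousSMul R M] [Fintype ι] [Fintype κ]

noncomputable def finiteRankOfMatrix (A : Matrix ι κ R) (f : κ → M →L[R] R) (v : ι → M) :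
    M →L[R] M :=
  ∑ i, ∑ j, A i j • (f j).smulRight (v i)

variable (A : Matrix ι κ R) (f : κ → M →L[R] R) (v : ι → M)

theorem finiteRankOfMatrix_apply (x : M) :
    finiteRankOfMatrix A f v x = ∑ i, (∑ j, A i j * f j x) • v i := by
  simp [finiteRankOfMatrix, Finset.sum_smul, smul_smul]

theorem finiteRankOfMatrix_apply_mem_span (x : M) :
    finiteRankOfMatrix A f v x ∈ span R (range v) := by
  rw [finiteRankOfMatrix_apply]
  exact sum_mem fun i _ => smul_mem _ _ (subset_span (mem_range_self i))

variable {A f v} [DecidableEq ι]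

theorem finiteRankOfMatrix_apply_self (hA : A * Matrix.of (fun j i => f j (v i)) = 1) (k : ι) :
    finiteRankOfMatrix A f v (v k) = v k := by
  have hcoeff : ∀ i, ∑ j, A i j * f j (v k) = (1 : Matrix ι ι R) i k := fun i => by
    rw [← hA, Matrix.mul_apply]
    rfl
  simp [finiteRankOfMatrix_apply, hcoeff, Matrix.one_apply]

theorem finiteRankOfMatrix_apply_of_mem_span (hA : A * Matrix.of (fun j i => f j (v i)) = 1)
    {x : M} (hx : x ∈ span R (range v)) : finiteRankOfMatrix A f v x = x :=
  LinearMap.eqOn_span (f := (finiteRankOfMatrix A f v : M →ₗ[R] M)) (g := LinearMap.id)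
    (by rintro _ ⟨k, rfl⟩; exact finiteRankOfMatrix_apply_self hA k) hx

theorem finiteRankOfMatrix_comp_self (hA : A * Matrix.of (fun j i => f j (v i)) = 1) :
    finiteRankOfMatrix A f v ∘L finiteRankOfMatrix A f v = finiteRankOfMatrix A f v :=
  ContinuousLinearMap.ext fun x =>
    finiteRankOfMatrix_apply_of_mem_span hA (finiteRankOfMatrix_apply_mem_span A f v x)

theorem range_finiteRankOfMatrix (hA : A * Matrix.of (fun j i => f j (v i)) = 1) :
    LinearMap.range (finiteRankOfMatrix A f v : M →ₗ[R] M) = span R (range v) :=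
  le_antisymm (LinearMap.range_le_iff_comap.mpr <| eq_top_iff.mpr fun x _ =>
      finiteRankOfMatrix_apply_mem_span A f v x)
    fun x hx => ⟨x, finiteRankOfMatrix_apply_of_mem_span hA hx⟩

end FiniteRankOfMatrix

theorem projection_onto_generalized_eigenspace_general
    {X : Type*} [NormedAddCommGroup X] [NormedSpace ℂ X]
    (T : X →L[ℂ] X) (l : ℂ) (p n m : ℕ)
    (e : Module.Basis (Fin n) ℂ (LinearMap.ker (((T - l • 1) ^ p : X →L[ℂ] X) : X →ₗ[ℂ] X)))
    (estar : Module.Basis (Fin m) ℂ (LinearMap.ker (((dualOp T - l • 1) ^ p : StrongDual ℂ X →L[ℂ] StrongDual ℂ X) :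
      StrongDual ℂ X →ₗ[ℂ] StrongDual ℂ X)))
    (G : Matrix (Fin m) (Fin n) ℂ)
    (hG : G = Matrix.of fun j i => (estar j : StrongDual ℂ X) (e i : X))
    (A : Matrix (Fin n) (Fin m) ℂ) (hA : A * G = 1)
    (P : X →L[ℂ] X)
    (hP : P = ∑ i : Fin n, ∑ j : Fin m,
      (A i j) • ((estar j : StrongDual ℂ X).smulRight (e i : X))) :
    P ∘L P = P ∧
    FiniteDimensional ℂ (LinearMap.range (P : X →ₗ[ℂ] X)) ∧
    LinearMap.range (P : X →ₗ[ℂ] X) = LinearMap.ker (((T - l • 1) ^ p : X →L[ℂ] X) : X →ₗ[ℂ] X) ∧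
    IsClosed ((LinearMap.ker (((T - l • 1) ^ p : X →L[ℂ] X) : X →ₗ[ℂ] X) : Submodule ℂ X) : Set X) := by
  have hP' : P = finiteRankOfMatrix A (fun j => (estar j : StrongDual ℂ X)) (fun i => (e i : X)) :=
    hP
  subst hG hP'
  have hrange := (range_finiteRankOfMatrix hA).trans e.span_coe_eq
  refine ⟨finiteRankOfMatrix_comp_self hA, ?_, hrange, ContinuousLinearMap.isClosed_ker _⟩
  rw [hrange]
  exact Module.Finite.of_basis e

/-- Let `λ` be an eigenvalue of `T` such that `(T - λI)^p` has closed
range, `0 < dim ker (T - λI)^p = n ≤ m = dim ker (T* - λI)^p < ∞`, and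
`ker (T - λI)^p = ker (T - λI)^(p+1)` (finite ascent).  If `A ∈ ℂ^{n×m}` is the
Moore–Penrose left inverse of the Gram matrix `G` (so `A * G = 1`), then the finite-rank
operator `P x = Σᵢ Σⱼ aᵢⱼ e*ⱼ(x) eᵢ` is a continuous projection of `X` onto the closed
subspace `ker (T - λI)^p`. -/
theorem projection_onto_generalized_eigenspace
    {X : Type*} [NormedAddCommGroup X] [NormedSpace ℂ X] [CompleteSpace X]
    (T : X →L[ℂ] X) (l : ℂ) (p n m : ℕ) (hp : 0 < p) (hn : 0 < n) (hnm : n ≤ m)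
    (heig : LinearMap.ker ((T - l • 1 : X →L[ℂ] X) : X →ₗ[ℂ] X) ≠ ⊥)
    (hclosed : IsClosed (LinearMap.range (((T - l • 1) ^ p : X →L[ℂ] X) : X →ₗ[ℂ] X) : Set X))
    (hasc : LinearMap.ker (((T - l • 1) ^ p : X →L[ℂ] X) : X →ₗ[ℂ] X) = LinearMap.ker (((T - l • 1) ^ (p + 1) : X →L[ℂ] X) : X →ₗ[ℂ] X))
    (e : Module.Basis (Fin n) ℂ (LinearMap.ker (((T - l • 1) ^ p : X →L[ℂ] X) : X →ₗ[ℂ] X)))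
    (estar : Module.Basis (Fin m) ℂ (LinearMap.ker (((dualOp T - l • 1) ^ p : StrongDual ℂ X →L[ℂ] StrongDual ℂ X) :
      StrongDual ℂ X →ₗ[ℂ] StrongDual ℂ X)))
    (G : Matrix (Fin m) (Fin n) ℂ)
    (hG : G = Matrix.of fun j i => (estar j : StrongDual ℂ X) (e i : X))
    (A : Matrix (Fin n) (Fin m) ℂ) (hA : A * G = 1)
    (P : X →L[ℂ] X)
    (hP : P = ∑ i : Fin n, ∑ j : Fin m,
      (A i j) • ((estar j : StrongDual ℂ X).smulRight (e i : X))) :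
    P ∘L P = P ∧
    FiniteDimensional ℂ (LinearMap.range (P : X →ₗ[ℂ] X)) ∧
    LinearMap.range (P : X →ₗ[ℂ] X) = LinearMap.ker (((T - l • 1) ^ p : X →L[ℂ] X) : X →ₗ[ℂ] X) ∧
    IsClosed ((LinearMap.ker (((T - l • 1) ^ p : X →L[ℂ] X) : X →ₗ[ℂ] X) : Submodule ℂ X) : Set X) :=
  projection_onto_generalized_eigenspace_general T l p n m e estar G hG A hA P hP
end

section
/- Let X be a complex normed vector space, M ⊆ X a subspace with basis (e_1,…,e_n) where 0 < n < ∞, and Λ ⊆ X* a subspace of continuous linear functionals with basis (e*_1,…,e*_m), where n ≤ m < ∞. For a matrix A = (a_{ij}) ∈ ℂ^{n×m} define the operator P_A on X by P_A x = Σ_{i=1}^{n} Σ_{j=1}^{m} a_{ij} e*_j(x) e_i. Then there exists A ∈ ℂ^{n×m} such that P_A is a projection of X onto M (i.e., P_A∘P_A = P_A and range(P_A) = M) if and only if the m×n Gram matrix G with entries G_{ji} = e*_j(e_i) has full column rank n; in that case one may take A to be the Moore–Penrose left inverse of G, which satisfies A·G = I_n. -/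
/-!
`P_A` always maps `X` into `span e = M`, and on the vectors `eₖ` it acts through the matrix `A G`:
`P_A eₖ = Σᵢ (A G)ᵢₖ eᵢ`. Since the `eᵢ` are linearly independent, `P_A` fixes `M` (i.e. is a
projection onto `M`) exactly when `A G = 1`. A left inverse of `G` forces `rank G = n` because
`rank (A G) ≤ rank G`; conversely, if `rank G = n` then `rank (Gᴴ G) = rank G = n`, so `Gᴴ G` is
invertible and the Moore–Penrose left inverse `(Gᴴ G)⁻¹ Gᴴ` works.
-/

/-- The operator `P_A x = Σᵢ Σⱼ aᵢⱼ e*ⱼ(x) eᵢ` built from vectors `eᵢ`, functionals `e*ⱼ`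
and a coefficient matrix `A`. -/
noncomputable def projOp {X : Type*} [NormedAddCommGroup X] [NormedSpace ℂ X]
    {n m : ℕ} (e : Fin n → X) (estar : Fin m → StrongDual ℂ X)
    (A : Matrix (Fin n) (Fin m) ℂ) : X →L[ℂ] X :=
  ∑ i : Fin n, ∑ j : Fin m, (A i j) • ((estar j).smulRight (e i))

namespace Matrix

variable {m n K : Type*} [Fintype m] [Fintype n] [DecidableEq n] [Field K]

theorem isUnit_of_rank_eq_card {A : Matrix n n K} (hA : A.rank = Fintype.card n) : IsUnit A := by
  rw [← mulVec_surjective_iff_isUnit, ← coe_mulVecLin, ← LinearMap.range_eq_top]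
  apply Submodule.eq_top_of_finrank_eq
  rw [← rank, hA, Module.finrank_fintype_fun_eq_card]

theorem conjTranspose_mul_self_inv_mul_conjTranspose_mul [PartialOrder K] [StarRing K]
    [StarOrderedRing K] {G : Matrix m n K} (hG : G.rank = Fintype.card n) :
    (Gᴴ * G)⁻¹ * Gᴴ * G = 1 := by
  have : IsUnit (Gᴴ * G) := isUnit_of_rank_eq_card (by rw [rank_conjTranspose_mul_self, hG])
  rw [Matrix.mul_assoc, nonsing_inv_mul _ ((isUnit_iff_isUnit_det _).mp this)]

theorem exists_mul_eq_one_iff_rank_eq_card [PartialOrder K] [StarRing K] [StarOrderedRing K]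
    {G : Matrix m n K} : (∃ A : Matrix n m K, A * G = 1) ↔ G.rank = Fintype.card n := by
  refine ⟨fun ⟨A, hAG⟩ => le_antisymm G.rank_le_card_width ?_,
    fun hG => ⟨_, conjTranspose_mul_self_inv_mul_conjTranspose_mul hG⟩⟩
  calc Fintype.card n = (A * G).rank := by rw [hAG, rank_one]
    _ ≤ G.rank := rank_mul_le_right A G

end Matrix

theorem LinearMap.isProj_iff_isIdempotentElem_and_range_eq {R M : Type*} [Semiring R]
    [AddCommMonoid M] [Module R M] {p : Submodule R M} {f : M →ₗ[R] M} :
    IsProj p f ↔ IsIdempotentElem f ∧ range f = p :=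
  ⟨fun h => ⟨h.isIdempotentElem, h.range⟩,
    fun ⟨hf, hp⟩ => hp ▸ (isProj_range_iff_isIdempotentElem f).2 hf⟩

theorem ContinuousLinearMap.comp_self_eq_and_range_eq_iff_isProj {R M : Type*} [Semiring R]
    [AddCommMonoid M] [Module R M] [TopologicalSpace M] {p : Submodule R M} {f : M →L[R] M} :
    f ∘L f = f ∧ LinearMap.range (f : M →ₗ[R] M) = p ↔ LinearMap.IsProj p (f : M →ₗ[R] M) := by
  rw [LinearMap.isProj_iff_isIdempotentElem_and_range_eq, IsIdempotentElem, Module.End.mul_eq_comp,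
    ← toLinearMap_comp, coe_inj]

section projOp

variable {X : Type*} [NormedAddCommGroup X] [NormedSpace ℂ X] {n m : ℕ}
  (e : Fin n → X) (estar : Fin m → StrongDual ℂ X)

noncomputable def gram : Matrix (Fin m) (Fin n) ℂ :=
  Matrix.of fun j i => estar j (e i)

variable (A : Matrix (Fin n) (Fin m) ℂ)

theorem projOp_apply (x : X) :
    projOp e estar A x = ∑ i, (∑ j, A i j * estar j x) • e i := by
  simp [projOp, Finset.sum_smul, smul_smul]

theorem projOp_apply_mem_span (x : X) : projOp e estar A x ∈ Submodule.span ℂ (Set.range e) := by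
  rw [projOp_apply]
  exact Submodule.sum_mem _ fun i _ => Submodule.smul_mem _ _ (Submodule.subset_span ⟨i, rfl⟩)

theorem projOp_apply_eq_sum_mul_gram (k : Fin n) :
    projOp e estar A (e k) = ∑ i, (A * gram e estar) i k • e i := by
  simp only [projOp_apply, Matrix.mul_apply, gram, Matrix.of_apply]

theorem isProj_projOp_iff (he : LinearIndependent ℂ e) :
    LinearMap.IsProj (Submodule.span ℂ (Set.range e)) (projOp e estar A : X →ₗ[ℂ] X) ↔
      A * gram e estar = 1 := by
  constructor
  · intro hP
    ext i k
    have hk : ∑ i, (A * gram e estar) i k • e i =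
        ∑ i, (1 : Matrix (Fin n) (Fin n) ℂ) i k • e i := by
      rw [← projOp_apply_eq_sum_mul_gram, ← ContinuousLinearMap.coe_coe,
        hP.map_id _ (Submodule.subset_span ⟨k, rfl⟩)]
      simp [Matrix.one_apply]
    exact Fintype.linearIndependent_iffₛ.mp he _ _ hk i
  · intro hA
    refine ⟨projOp_apply_mem_span e estar A, fun x hx => ?_⟩
    refine LinearMap.eqOn_span (g := LinearMap.id) ?_ hx
    rintro _ ⟨k, rfl⟩
    simp [projOp_apply_eq_sum_mul_gram, hA, Matrix.one_apply]

theorem projOp_comp_self_eq_and_range_eq_iff {M : Submodule ℂ X} (he : LinearIndependent ℂ e)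
    (hM : Submodule.span ℂ (Set.range e) = M) :
    projOp e estar A ∘L projOp e estar A = projOp e estar A ∧
        LinearMap.range (projOp e estar A : X →ₗ[ℂ] X) = M ↔
      A * gram e estar = 1 := by
  rw [ContinuousLinearMap.comp_self_eq_and_range_eq_iff_isProj, ← hM, isProj_projOp_iff e estar A he]

end projOp

theorem projection_exists_iff_gram_full_column_rank_general
    {X : Type*} [NormedAddCommGroup X] [NormedSpace ℂ X]
    (M : Submodule ℂ X) (Λ : Submodule ℂ (StrongDual ℂ X))
    (n m : ℕ)
    (e : Module.Basis (Fin n) ℂ M) (estar : Module.Basis (Fin m) ℂ Λ)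
    (G : Matrix (Fin m) (Fin n) ℂ)
    (hG : G = Matrix.of fun j i => (estar j : StrongDual ℂ X) (e i : X)) :
    ((∃ A : Matrix (Fin n) (Fin m) ℂ,
        (projOp (fun i => (e i : X)) (fun j => (estar j : StrongDual ℂ X)) A) ∘L
          (projOp (fun i => (e i : X)) (fun j => (estar j : StrongDual ℂ X)) A) =
          projOp (fun i => (e i : X)) (fun j => (estar j : StrongDual ℂ X)) A ∧
        LinearMap.range
          ((projOp (fun i => (e i : X)) (fun j => (estar j : StrongDual ℂ X)) A : X →ₗ[ℂ] X)) = M)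
      ↔ G.rank = n) ∧
    (G.rank = n → ∃ A : Matrix (Fin n) (Fin m) ℂ, A * G = 1 ∧
        (projOp (fun i => (e i : X)) (fun j => (estar j : StrongDual ℂ X)) A) ∘L
          (projOp (fun i => (e i : X)) (fun j => (estar j : StrongDual ℂ X)) A) =
          projOp (fun i => (e i : X)) (fun j => (estar j : StrongDual ℂ X)) A ∧
        LinearMap.range
          ((projOp (fun i => (e i : X)) (fun j => (estar j : StrongDual ℂ X)) A : X →ₗ[ℂ] X)) = M) := by
  have he : LinearIndependent ℂ fun i => (e i : X) :=
    e.linearIndependent.map' M.subtype M.ker_subtype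
  have hspan : Submodule.span ℂ (Set.range fun i => (e i : X)) = M := by
    rw [Set.range_comp', ← M.coe_subtype, Submodule.span_image, e.span_eq, Submodule.map_top,
      Submodule.range_subtype]
  obtain rfl : G = gram (fun i => (e i : X)) (fun j => (estar j : StrongDual ℂ X)) := hG
  open scoped ComplexOrder in
  simp only [projOp_comp_self_eq_and_range_eq_iff _ _ _ he hspan, and_self,
    Matrix.exists_mul_eq_one_iff_rank_eq_card, Fintype.card_fin, iff_self, imp_self]

/-- Let `M ⊆ X` be a subspace with basis `(e₁,…,eₙ)`, `0 < n ≤ m < ∞`, and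
`Λ ⊆ X*` a subspace of continuous functionals with basis `(e*₁,…,e*ₘ)`.  There exists
`A ∈ ℂ^{n×m}` making `P_A` a projection of `X` onto `M` iff the `m × n` Gram matrix `G`
has full column rank `n`; in that case one may take `A` with `A * G = 1` (the Moore–Penrose
left inverse of `G`). -/
theorem projection_exists_iff_gram_full_column_rank
    {X : Type*} [NormedAddCommGroup X] [NormedSpace ℂ X]
    (M : Submodule ℂ X) (Λ : Submodule ℂ (StrongDual ℂ X))
    (n m : ℕ) (hn : 0 < n) (hnm : n ≤ m)
    (e : Module.Basis (Fin n) ℂ M) (estar : Module.Basis (Fin m) ℂ Λ)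
    (G : Matrix (Fin m) (Fin n) ℂ)
    (hG : G = Matrix.of fun j i => (estar j : StrongDual ℂ X) (e i : X)) :
    ((∃ A : Matrix (Fin n) (Fin m) ℂ,
        (projOp (fun i => (e i : X)) (fun j => (estar j : StrongDual ℂ X)) A) ∘L
          (projOp (fun i => (e i : X)) (fun j => (estar j : StrongDual ℂ X)) A) =
          projOp (fun i => (e i : X)) (fun j => (estar j : StrongDual ℂ X)) A ∧
        LinearMap.range
          ((projOp (fun i => (e i : X)) (fun j => (estar j : StrongDual ℂ X)) A : X →ₗ[ℂ] X)) = M)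
      ↔ G.rank = n) ∧
    (G.rank = n → ∃ A : Matrix (Fin n) (Fin m) ℂ, A * G = 1 ∧
        (projOp (fun i => (e i : X)) (fun j => (estar j : StrongDual ℂ X)) A) ∘L
          (projOp (fun i => (e i : X)) (fun j => (estar j : StrongDual ℂ X)) A) =
          projOp (fun i => (e i : X)) (fun j => (estar j : StrongDual ℂ X)) A ∧
        LinearMap.range
          ((projOp (fun i => (e i : X)) (fun j => (estar j : StrongDual ℂ X)) A : X →ₗ[ℂ] X)) = M) :=
  projection_exists_iff_gram_full_column_rank_general M Λ n m e estar G hG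
end

section
/- Let X be a complex Banach space and T a bounded linear operator on X with ‖T‖ ≤ 1 such that T − I has closed range and dim ker(T − I) = dim ker(T* − I) = n < ∞ (T − I is a Weyl operator). Then the following are equivalent: (1) ker((T − I)²) = ker(T − I) and range((T − I)²) = range(T − I) (chain length one); (2) X = ker(T − I) ⊕ range(T − I); (3) the n×n Gram matrix G with entries G_{ji} = e*_j(e_i) is invertible; (4) the operator P = Φ G^{-1} Φ*, i.e., Px = Σ_{i,j} a_{ij} e*_j(x) e_i with (a_{ij}) = G^{-1}, is a projection onto ker(T − I); (5) the Cesàro means n^{-1} Σ_{k=0}^{n−1} T^k x converge to P x for every x ∈ X as n → ∞. -/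
open Filter (Tendsto atTop eventually_ne_atTop)
open Topology
open LinearMap (ker range)

namespace Module.End

variable {R M : Type*} [Semiring R] [AddCommMonoid M] [Module R M] (f : Module.End R M)

theorem disjoint_ker_range_of_ker_sq_le (h : ker (f ^ 2) ≤ ker f) :
    Disjoint (ker f) (range f) := by
  rw [Submodule.disjoint_def]
  rintro _ hfx ⟨x, rfl⟩
  exact h (by rwa [LinearMap.mem_ker, sq, Module.End.mul_apply])

theorem ker_sq_eq_and_range_sq_eq_of_isCompl (h : IsCompl (ker f) (range f)) :
    ker (f ^ 2) = ker f ∧ range (f ^ 2) = range f := by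
  rw [sq, Module.End.mul_eq_comp]
  refine ⟨le_antisymm (fun x hx => ?_) (LinearMap.ker_le_ker_comp f f),
    le_antisymm (LinearMap.range_comp_le_range f f) ?_⟩
  · exact Submodule.disjoint_def.1 h.disjoint (f x) hx ⟨x, rfl⟩
  · rintro _ ⟨x, rfl⟩
    obtain ⟨k, hk, _, ⟨w, rfl⟩, hx⟩ :=
      Submodule.mem_sup.1 (h.codisjoint.eq_top ▸ Submodule.mem_top : x ∈ _)
    exact ⟨w, by simp [← hx, LinearMap.mem_ker.1 hk]⟩

end Module.End

theorem LinearMap.comp_self_eq_and_range_eq_iff {R M N : Type*} [Semiring R] [AddCommMonoid M]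
    [AddCommMonoid N] [Module R M] [Module R N] {P : M →ₗ[R] M} {Φ : N →ₗ[R] M}
    (hP : range P ≤ range Φ) : P ∘ₗ P = P ∧ range P = range Φ ↔ P ∘ₗ Φ = Φ := by
  constructor
  · rintro ⟨hPP, hrange⟩
    ext c
    obtain ⟨x, hx⟩ : Φ c ∈ range P := hrange ▸ LinearMap.mem_range_self Φ c
    rw [LinearMap.comp_apply, ← hx, ← LinearMap.comp_apply, hPP]
  · intro hPΦ
    refine ⟨LinearMap.ext fun x => ?_, le_antisymm hP ?_⟩
    · obtain ⟨c, hc⟩ := hP (LinearMap.mem_range_self P x)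
      rw [LinearMap.comp_apply, ← hc, ← LinearMap.comp_apply, hPΦ]
    · rintro _ ⟨c, rfl⟩
      exact ⟨Φ c, LinearMap.congr_fun hPΦ c⟩

namespace Matrix

variable {𝕜 M ι : Type*} [Field 𝕜] [AddCommGroup M] [Module 𝕜 M] [Fintype ι] [DecidableEq ι]

noncomputable def gramProj (Φ : (ι → 𝕜) →ₗ[𝕜] M) (Ψ : M →ₗ[𝕜] ι → 𝕜) (G : Matrix ι ι 𝕜) :
    M →ₗ[𝕜] M :=
  Φ ∘ₗ G⁻¹.toLin' ∘ₗ Ψ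

variable {Φ : (ι → 𝕜) →ₗ[𝕜] M} {Ψ : M →ₗ[𝕜] ι → 𝕜} {G : Matrix ι ι 𝕜}

theorem range_gramProj_le : range (gramProj Φ Ψ G) ≤ range Φ :=
  LinearMap.range_comp_le_range _ _

theorem comp_gramProj_of_isUnit (hG : Ψ ∘ₗ Φ = G.toLin') (h : IsUnit G) :
    Ψ ∘ₗ gramProj Φ Ψ G = Ψ := by
  rw [gramProj, ← LinearMap.comp_assoc, hG, ← LinearMap.comp_assoc, ← toLin'_mul,
    mul_nonsing_inv G ((isUnit_iff_isUnit_det G).1 h), toLin'_one, LinearMap.id_comp]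

theorem sub_gramProj_mem_ker (hG : Ψ ∘ₗ Φ = G.toLin') (h : IsUnit G) (x : M) :
    x - gramProj Φ Ψ G x ∈ ker Ψ := by
  rw [LinearMap.mem_ker, map_sub, ← LinearMap.comp_apply, comp_gramProj_of_isUnit hG h, sub_self]

theorem gramProj_comp_eq_iff_isUnit (hΦ : Function.Injective Φ) (hG : Ψ ∘ₗ Φ = G.toLin') :
    gramProj Φ Ψ G ∘ₗ Φ = Φ ↔ IsUnit G := by
  rw [gramProj, LinearMap.comp_assoc, LinearMap.comp_assoc, hG, ← toLin'_mul]
  conv_lhs => rhs; rw [← LinearMap.comp_id Φ]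
  rw [LinearMap.cancel_left hΦ, ← toLin'_one, toLin'.injective.eq_iff, isUnit_iff_isUnit_det]
  exact ⟨isUnit_det_of_left_inverse, nonsing_inv_mul G⟩

theorem isUnit_iff_disjoint_range_ker (hΦ : Function.Injective Φ) (hG : Ψ ∘ₗ Φ = G.toLin') :
    IsUnit G ↔ Disjoint (range Φ) (ker Ψ) := by
  rw [← mulVec_injective_iff_isUnit, show G.mulVec = Ψ ∘ₗ Φ by rw [hG]; rfl,
    ← LinearMap.ker_eq_bot, LinearMap.ker_comp, Submodule.disjoint_def, Submodule.eq_bot_iff]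
  constructor
  · rintro h _ ⟨c, rfl⟩ hc
    rw [h c hc, map_zero]
  · exact fun h c hc => hΦ (by rw [h _ ⟨c, rfl⟩ hc, map_zero])

theorem isCompl_range_ker_of_isUnit (hΦ : Function.Injective Φ) (hG : Ψ ∘ₗ Φ = G.toLin')
    (h : IsUnit G) : IsCompl (range Φ) (ker Ψ) := by
  refine ⟨(isUnit_iff_disjoint_range_ker hΦ hG).1 h,
    codisjoint_iff.2 (eq_top_iff.2 fun x _ => Submodule.mem_sup.2 ?_)⟩
  exact ⟨gramProj Φ Ψ G x, range_gramProj_le ⟨x, rfl⟩, x - gramProj Φ Ψ G x,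
    sub_gramProj_mem_ker hG h x, add_sub_cancel _ _⟩

end Matrix

section Annihilator

variable {𝕜 E : Type*} [RCLike 𝕜] [NormedAddCommGroup E] [NormedSpace 𝕜 E]

theorem Submodule.mem_of_forall_dual_eq_zero {p : Submodule 𝕜 E} (hp : IsClosed (p : Set E))
    {x : E} (h : ∀ f : StrongDual 𝕜 E, (∀ y ∈ p, f y = 0) → f x = 0) : x ∈ p := by
  have : IsClosed (p : Set E) := hp
  by_contra hx
  obtain ⟨g, hg⟩ := SeparatingDual.exists_ne_zero (R := 𝕜)
    ((Submodule.Quotient.mk_eq_zero p).not.2 hx)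
  exact hg (h (g ∘L p.mkQL) fun y hy => by simp [(Submodule.Quotient.mk_eq_zero p).2 hy])

theorem ker_pi_eq_of_basis_annihilator {ι : Type*} [Fintype ι] {p : Submodule 𝕜 E}
    (hp : IsClosed (p : Set E)) {V : Submodule 𝕜 (StrongDual 𝕜 E)}
    (hV : ∀ f, f ∈ V ↔ ∀ y ∈ p, f y = 0) (b : Module.Basis ι 𝕜 V) :
    ker (LinearMap.pi fun j => ((b j : StrongDual 𝕜 E) : E →ₗ[𝕜] 𝕜)) = p := by
  refine le_antisymm (fun x hx => p.mem_of_forall_dual_eq_zero hp fun f hf => ?_)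
    fun x hx => funext fun j => (hV _).1 (b j).2 x hx
  have hbx : ∀ j, (b j : StrongDual 𝕜 E) x = 0 := congr_fun hx
  obtain ⟨F, rfl⟩ : ∃ F : V, (F : StrongDual 𝕜 E) = f := ⟨⟨f, (hV f).2 hf⟩, rfl⟩
  rw [← b.sum_repr F]
  simp only [Submodule.coe_sum, Submodule.coe_smul, _root_.sum_apply, _root_.smul_apply, hbx,
    smul_zero, Finset.sum_const_zero]

end Annihilator

theorem mem_ker_dualOp_sub_one_iff {X : Type*} [NormedAddCommGroup X] [NormedSpace ℂ X]
    (T : X →L[ℂ] X) (f : StrongDual ℂ X) :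
    f ∈ ker ((dualOp T - 1 : StrongDual ℂ X →L[ℂ] StrongDual ℂ X) :
      StrongDual ℂ X →ₗ[ℂ] StrongDual ℂ X) ↔
      ∀ y ∈ range ((T - 1 : X →L[ℂ] X) : X →ₗ[ℂ] X), f y = 0 := by
  simp [ContinuousLinearMap.ext_iff, dualOp, sub_eq_zero]

section Cesaro

variable {𝕜 E : Type*} [RCLike 𝕜] [NormedAddCommGroup E] [NormedSpace 𝕜 E] (T : E →L[𝕜] E)

noncomputable def cesaroMean (N : ℕ) : E →L[𝕜] E :=
  (N : 𝕜)⁻¹ • ∑ k ∈ Finset.range N, T ^ k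

theorem cesaroMean_apply (N : ℕ) (x : E) :
    cesaroMean T N x = (N : 𝕜)⁻¹ • ∑ k ∈ Finset.range N, (T ^ k) x := by
  simp [cesaroMean]

theorem cesaroMean_mul_sub_one (N : ℕ) :
    cesaroMean T N * (T - 1) = (N : 𝕜)⁻¹ • (T ^ N - 1) := by
  rw [cesaroMean, smul_mul_assoc, geom_sum_mul]

theorem norm_pow_apply_le_of_norm_le_one (hT : ‖T‖ ≤ 1) (N : ℕ) (x : E) :
    ‖(T ^ N) x‖ ≤ ‖x‖ := by
  induction N with
  | zero => simp
  | succ N ih =>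
    rw [pow_succ', mul_apply_eq_comp]
    exact (T.le_of_opNorm_le hT _).trans (by rw [one_mul]; exact ih)

theorem tendsto_cesaroMean_of_mem_ker {x : E}
    (hx : x ∈ ker ((T - 1 : E →L[𝕜] E) : E →ₗ[𝕜] E)) :
    Tendsto (cesaroMean T · x) atTop (𝓝 x) := by
  have hpow (k : ℕ) : (T ^ k) x = x := by
    rw [FunLike.coe_pow_eq_iterate]
    exact Function.iterate_fixed (by simpa [sub_eq_zero] using hx) k
  refine tendsto_const_nhds.congr' (eventually_ne_atTop 0 |>.mono fun N hN => ?_)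
  simp [cesaroMean_apply, hpow, ← Nat.cast_smul_eq_nsmul 𝕜, smul_smul, hN]

theorem tendsto_cesaroMean_sub_one_apply (hT : ‖T‖ ≤ 1) (w : E) :
    Tendsto (cesaroMean T · ((T - 1) w)) atTop (𝓝 0) := by
  refine squeeze_zero_norm (fun N => ?_) (tendsto_const_div_atTop_nhds_zero_nat (2 * ‖w‖))
  rw [← mul_apply_eq_comp, cesaroMean_mul_sub_one, _root_.smul_apply, norm_smul, norm_inv,
    RCLike.norm_natCast, div_eq_inv_mul]
  gcongr
  calc ‖(T ^ N - 1) w‖ ≤ ‖(T ^ N) w‖ + ‖w‖ := norm_sub_le _ _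
    _ ≤ 2 * ‖w‖ := by linarith [norm_pow_apply_le_of_norm_le_one T hT N w]

theorem tendsto_cesaroMean_of_sub_mem_range (hT : ‖T‖ ≤ 1) {x y : E}
    (hy : y ∈ ker ((T - 1 : E →L[𝕜] E) : E →ₗ[𝕜] E))
    (hxy : x - y ∈ range ((T - 1 : E →L[𝕜] E) : E →ₗ[𝕜] E)) :
    Tendsto (cesaroMean T · x) atTop (𝓝 y) := by
  obtain ⟨w, hw⟩ := hxy
  have hx : x = y + (T - 1) w := by rw [← ContinuousLinearMap.coe_coe, hw]; abel
  simpa [hx] using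
    (tendsto_cesaroMean_of_mem_ker T hy).add (tendsto_cesaroMean_sub_one_apply T hT w)

end Cesaro

theorem ergodic_tfae_of_gramProj {𝕜 E ι : Type*} [RCLike 𝕜] [NormedAddCommGroup E]
    [NormedSpace 𝕜 E] [Fintype ι] [DecidableEq ι] {T : E →L[𝕜] E} (hT : ‖T‖ ≤ 1)
    {Φ : (ι → 𝕜) →ₗ[𝕜] E} {Ψ : E →ₗ[𝕜] ι → 𝕜} {G : Matrix ι ι 𝕜} (hΦ : Function.Injective Φ)
    (hK : range Φ = ker ((T - 1 : E →L[𝕜] E) : E →ₗ[𝕜] E))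
    (hR : ker Ψ = range ((T - 1 : E →L[𝕜] E) : E →ₗ[𝕜] E)) (hG : Ψ ∘ₗ Φ = G.toLin') :
    List.TFAE [
      ker (((T - 1 : E →L[𝕜] E) : E →ₗ[𝕜] E) ^ 2) = ker ((T - 1 : E →L[𝕜] E) : E →ₗ[𝕜] E) ∧
        range (((T - 1 : E →L[𝕜] E) : E →ₗ[𝕜] E) ^ 2) = range ((T - 1 : E →L[𝕜] E) : E →ₗ[𝕜] E),
      IsCompl (ker ((T - 1 : E →L[𝕜] E) : E →ₗ[𝕜] E)) (range ((T - 1 : E →L[𝕜] E) : E →ₗ[𝕜] E)),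
      IsUnit G,
      Matrix.gramProj Φ Ψ G ∘ₗ Matrix.gramProj Φ Ψ G = Matrix.gramProj Φ Ψ G ∧
        range (Matrix.gramProj Φ Ψ G) = ker ((T - 1 : E →L[𝕜] E) : E →ₗ[𝕜] E),
      ∀ x : E, Tendsto (cesaroMean T · x) atTop (𝓝 (Matrix.gramProj Φ Ψ G x))] := by
  tfae_have 1 → 3 := fun h => by
    rw [Matrix.isUnit_iff_disjoint_range_ker hΦ hG, hK, hR]
    exact Module.End.disjoint_ker_range_of_ker_sq_le _ h.1.le
  tfae_have 3 → 2 := fun h => hK ▸ hR ▸ Matrix.isCompl_range_ker_of_isUnit hΦ hG h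
  tfae_have 2 → 1 := Module.End.ker_sq_eq_and_range_sq_eq_of_isCompl _
  tfae_have 3 ↔ 4 := by
    rw [← hK, LinearMap.comp_self_eq_and_range_eq_iff Matrix.range_gramProj_le,
      Matrix.gramProj_comp_eq_iff_isUnit hΦ hG]
  tfae_have 3 → 5 := fun h x => tendsto_cesaroMean_of_sub_mem_range T hT
    (hK ▸ Matrix.range_gramProj_le ⟨x, rfl⟩) (hR ▸ Matrix.sub_gramProj_mem_ker hG h x)
  tfae_have 5 → 4 := fun h => by
    rw [← hK, LinearMap.comp_self_eq_and_range_eq_iff Matrix.range_gramProj_le]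
    exact LinearMap.ext fun c => tendsto_nhds_unique (h (Φ c))
      (tendsto_cesaroMean_of_mem_ker T (hK ▸ ⟨c, rfl⟩))
  tfae_finish

theorem ergodic_tfae_general
    {X : Type*} [NormedAddCommGroup X] [NormedSpace ℂ X]
    (T : X →L[ℂ] X) (hT : ‖T‖ ≤ 1)
    (hclosed : IsClosed (LinearMap.range ((T - 1 : X →L[ℂ] X) : X →ₗ[ℂ] X) : Set X))
    (n : ℕ)
    (e : Module.Basis (Fin n) ℂ (LinearMap.ker ((T - 1 : X →L[ℂ] X) : X →ₗ[ℂ] X)))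
    (estar : Module.Basis (Fin n) ℂ (LinearMap.ker ((dualOp T - 1 : StrongDual ℂ X →L[ℂ] StrongDual ℂ X) :
      StrongDual ℂ X →ₗ[ℂ] StrongDual ℂ X)))
    (G : Matrix (Fin n) (Fin n) ℂ)
    (hG : G = Matrix.of fun j i => (estar j : StrongDual ℂ X) (e i : X))
    (P : X →L[ℂ] X)
    (hP : P = ∑ i : Fin n, ∑ j : Fin n,
      (G⁻¹ i j) • ((estar j : StrongDual ℂ X).smulRight (e i : X))) :
    List.TFAE [
      LinearMap.ker (((T - 1) ^ 2 : X →L[ℂ] X) : X →ₗ[ℂ] X) = LinearMap.ker ((T - 1 : X →L[ℂ] X) : X →ₗ[ℂ] X) ∧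
        LinearMap.range (((T - 1) ^ 2 : X →L[ℂ] X) : X →ₗ[ℂ] X) = LinearMap.range ((T - 1 : X →L[ℂ] X) : X →ₗ[ℂ] X),
      IsCompl (LinearMap.ker ((T - 1 : X →L[ℂ] X) : X →ₗ[ℂ] X)) (LinearMap.range ((T - 1 : X →L[ℂ] X) : X →ₗ[ℂ] X)),
      IsUnit G,
      P ∘L P = P ∧ LinearMap.range (P : X →ₗ[ℂ] X) = LinearMap.ker ((T - 1 : X →L[ℂ] X) : X →ₗ[ℂ] X),
      ∀ x : X, Filter.Tendsto
        (fun N : ℕ => (N : ℂ)⁻¹ • ∑ k ∈ Finset.range N, (T ^ k) x)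
        Filter.atTop (nhds (P x))] := by
  let Φ : (Fin n → ℂ) →ₗ[ℂ] X := Fintype.linearCombination ℂ fun i => (e i : X)
  let Ψ : X →ₗ[ℂ] Fin n → ℂ := LinearMap.pi fun j => ((estar j : StrongDual ℂ X) : X →ₗ[ℂ] ℂ)
  have hΦ : Function.Injective Φ := linearIndependent_iff_injective_fintypeLinearCombination.1
    (e.linearIndependent.map' _ (Submodule.ker_subtype _))
  have hK : range Φ = ker ((T - 1 : X →L[ℂ] X) : X →ₗ[ℂ] X) := by
    rw [Fintype.range_linearCombination, Set.range_comp' Subtype.val e, ← Submodule.coe_subtype,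
      Submodule.span_image, e.span_eq, Submodule.map_top, Submodule.range_subtype]
  have hR : ker Ψ = range ((T - 1 : X →L[ℂ] X) : X →ₗ[ℂ] X) :=
    ker_pi_eq_of_basis_annihilator hclosed (mem_ker_dualOp_sub_one_iff T) estar
  have hΨΦ : Ψ ∘ₗ Φ = G.toLin' := by
    refine LinearMap.ext fun c => funext fun j => ?_
    simp [Φ, Ψ, Fintype.linearCombination_apply, hG, Matrix.mulVec, dotProduct, mul_comm]
  have hPΦ : (P : X →ₗ[ℂ] X) = Matrix.gramProj Φ Ψ G := by
    ext x
    simp [hP, Matrix.gramProj, Φ, Ψ, Fintype.linearCombination_apply, Matrix.mulVec, dotProduct,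
      Finset.sum_smul, smul_smul]
  have h := ergodic_tfae_of_gramProj hT hΦ hK hR hΨΦ
  rw [← hPΦ] at h
  simpa only [← ContinuousLinearMap.toLinearMap_pow, ← ContinuousLinearMap.toLinearMap_comp,
    ContinuousLinearMap.coe_inj, ContinuousLinearMap.coe_coe, cesaroMean_apply] using h

/-- Let `T` be a contraction on a complex Banach space such that `T - I`
is a Weyl operator (closed range, `dim ker (T - I) = dim ker (T* - I) = n < ∞`).  With `G`
the Gram matrix of bases of `ker (T - I)` and `ker (T* - I)` and `P = Φ G⁻¹ Φ*`, the
following are equivalent: chain length one; `X = ker (T - I) ⊕ range (T - I)`; `G`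
invertible; `P` is a projection onto `ker (T - I)`; the Cesàro means of the iterates of `T`
converge strongly to `P`. -/
theorem ergodic_tfae
    {X : Type*} [NormedAddCommGroup X] [NormedSpace ℂ X] [CompleteSpace X]
    (T : X →L[ℂ] X) (hT : ‖T‖ ≤ 1)
    (hclosed : IsClosed (LinearMap.range ((T - 1 : X →L[ℂ] X) : X →ₗ[ℂ] X) : Set X))
    (n : ℕ)
    (e : Module.Basis (Fin n) ℂ (LinearMap.ker ((T - 1 : X →L[ℂ] X) : X →ₗ[ℂ] X)))
    (estar : Module.Basis (Fin n) ℂ (LinearMap.ker ((dualOp T - 1 : StrongDual ℂ X →L[ℂ] StrongDual ℂ X) :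
      StrongDual ℂ X →ₗ[ℂ] StrongDual ℂ X)))
    (G : Matrix (Fin n) (Fin n) ℂ)
    (hG : G = Matrix.of fun j i => (estar j : StrongDual ℂ X) (e i : X))
    (P : X →L[ℂ] X)
    (hP : P = ∑ i : Fin n, ∑ j : Fin n,
      (G⁻¹ i j) • ((estar j : StrongDual ℂ X).smulRight (e i : X))) :
    List.TFAE [
      LinearMap.ker (((T - 1) ^ 2 : X →L[ℂ] X) : X →ₗ[ℂ] X) = LinearMap.ker ((T - 1 : X →L[ℂ] X) : X →ₗ[ℂ] X) ∧
        LinearMap.range (((T - 1) ^ 2 : X →L[ℂ] X) : X →ₗ[ℂ] X) = LinearMap.range ((T - 1 : X →L[ℂ] X) : X →ₗ[ℂ] X),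
      IsCompl (LinearMap.ker ((T - 1 : X →L[ℂ] X) : X →ₗ[ℂ] X)) (LinearMap.range ((T - 1 : X →L[ℂ] X) : X →ₗ[ℂ] X)),
      IsUnit G,
      P ∘L P = P ∧ LinearMap.range (P : X →ₗ[ℂ] X) = LinearMap.ker ((T - 1 : X →L[ℂ] X) : X →ₗ[ℂ] X),
      ∀ x : X, Filter.Tendsto
        (fun N : ℕ => (N : ℂ)⁻¹ • ∑ k ∈ Finset.range N, (T ^ k) x)
        Filter.atTop (nhds (P x))] :=
  ergodic_tfae_general T hT hclosed n e estar G hG P hP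
end

section
/- Let X be a complex Banach space, T a bounded linear operator on X, and λ an eigenvalue of T such that T − λI is a Browder operator (closed range, dim ker(T − λI) = dim ker(T* − λI) < ∞, and finite equal ascent and descent). Then T − λI has ascent one (ker((T − λI)²) = ker(T − λI)) if and only if there exists a finite-rank continuous projection P on X with range(P) = ker(T − λI) satisfying T∘P = P∘T = λP. -/
open LinearMap (ker range)

namespace Module.End

variable {R M : Type*} [Ring R] [AddCommGroup M] [Module R M] {f : Module.End R M}

theorem ker_sq_eq_ker_iff_disjoint_ker_range :
    ker (f ^ 2) = ker f ↔ Disjoint (ker f) (range f) := by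
  simp only [Submodule.disjoint_def, SetLike.ext_iff, LinearMap.mem_ker, LinearMap.mem_range,
    sq, mul_apply]
  constructor
  · rintro h _ hy ⟨x, rfl⟩
    exact (h x).mp hy
  · intro h x
    exact ⟨fun hx ↦ h _ hx ⟨x, rfl⟩, fun hx ↦ by rw [hx, map_zero]⟩

theorem range_pow_le_range_pow_succ_of_disjoint (hf : Disjoint (ker f) (range f)) {n : ℕ}
    (h : range (f ^ (n + 2)) ≤ range (f ^ (n + 3))) :
    range (f ^ (n + 1)) ≤ range (f ^ (n + 2)) := by
  rintro _ ⟨y, rfl⟩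
  obtain ⟨z, hz⟩ := h ⟨y, rfl⟩
  have hker : (f ^ (n + 1)) y - (f ^ (n + 2)) z ∈ ker f := by
    rw [LinearMap.mem_ker, map_sub, ← mul_apply, ← mul_apply, ← pow_succ', ← pow_succ', hz,
      sub_self]
  have hrange : (f ^ (n + 1)) y - (f ^ (n + 2)) z ∈ range f := by
    rw [pow_succ', pow_succ' f (n + 1)]
    exact sub_mem ⟨_, rfl⟩ ⟨_, rfl⟩
  rw [sub_eq_zero.mp (Submodule.disjoint_def.mp hf _ hker hrange)]
  exact ⟨z, rfl⟩

theorem range_le_range_sq_of_disjoint (hf : Disjoint (ker f) (range f)) :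
    ∀ {p : ℕ}, range (f ^ p) ≤ range (f ^ (p + 1)) → range f ≤ range (f ^ 2)
  | 0, h => by
    rw [pow_zero, zero_add, pow_one, one_eq_id, LinearMap.range_id, top_le_iff] at h
    rw [sq, mul_eq_comp, LinearMap.range_comp_of_range_eq_top _ h, h]
  | 1, h => by rwa [pow_one] at h
  | p + 2, h =>
    range_le_range_sq_of_disjoint hf (range_pow_le_range_pow_succ_of_disjoint hf h)

theorem codisjoint_ker_range_of_range_le_range_sq (h : range f ≤ range (f ^ 2)) :
    Codisjoint (ker f) (range f) := by
  rw [codisjoint_iff, Submodule.eq_top_iff']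
  intro x
  obtain ⟨y, hy⟩ := h ⟨x, rfl⟩
  rw [sq, mul_apply] at hy
  have hker : x - f y ∈ ker f := by rw [LinearMap.mem_ker, map_sub, hy, sub_self]
  simpa using Submodule.add_mem_sup hker (LinearMap.mem_range_self f y)

theorem isCompl_ker_range_of_disjoint (hf : Disjoint (ker f) (range f)) {p : ℕ}
    (hdesc : range (f ^ p) ≤ range (f ^ (p + 1))) : IsCompl (ker f) (range f) :=
  ⟨hf, codisjoint_ker_range_of_range_le_range_sq (range_le_range_sq_of_disjoint hf hdesc)⟩

end Module.End

namespace ContinuousLinearMap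

variable {R M : Type*} [CommRing R] [TopologicalSpace M] [AddCommGroup M] [Module R M]
  [ContinuousConstSMul R M] {T P : M →L[R] M} {l : R}

theorem comp_eq_smul_iff_range_le_ker_sub_smul_one :
    T ∘L P = l • P ↔ range (P : M →ₗ[R] M) ≤ ker ((T - l • (1 : M →L[R] M)) : M →ₗ[R] M) := by
  simp [LinearMap.range_le_ker_iff, ContinuousLinearMap.ext_iff, LinearMap.ext_iff, sub_eq_zero]

theorem comp_eq_smul_iff_range_sub_smul_one_le_ker :
    P ∘L T = l • P ↔ range ((T - l • (1 : M →L[R] M)) : M →ₗ[R] M) ≤ ker (P : M →ₗ[R] M) := by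
  simp [LinearMap.range_le_ker_iff, ContinuousLinearMap.ext_iff, LinearMap.ext_iff, sub_eq_zero]

end ContinuousLinearMap

open Submodule ContinuousLinearMap

theorem ascent_one_iff_projection_general
    {X : Type*} [NormedAddCommGroup X] [NormedSpace ℂ X]
    (T : X →L[ℂ] X) (l : ℂ)
    (hclosed : IsClosed (LinearMap.range ((T - l • 1 : X →L[ℂ] X) : X →ₗ[ℂ] X) : Set X))
    (hfin : FiniteDimensional ℂ (LinearMap.ker ((T - l • 1 : X →L[ℂ] X) : X →ₗ[ℂ] X)))
    (hchain : ∃ p : ℕ, 0 < p ∧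
      LinearMap.ker (((T - l • 1) ^ p : X →L[ℂ] X) : X →ₗ[ℂ] X) = LinearMap.ker (((T - l • 1) ^ (p + 1) : X →L[ℂ] X) : X →ₗ[ℂ] X) ∧
      LinearMap.range (((T - l • 1) ^ p : X →L[ℂ] X) : X →ₗ[ℂ] X) = LinearMap.range (((T - l • 1) ^ (p + 1) : X →L[ℂ] X) : X →ₗ[ℂ] X)) :
    LinearMap.ker (((T - l • 1) ^ 2 : X →L[ℂ] X) : X →ₗ[ℂ] X) = LinearMap.ker ((T - l • 1 : X →L[ℂ] X) : X →ₗ[ℂ] X) ↔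
      ∃ P : X →L[ℂ] X, P ∘L P = P ∧ FiniteDimensional ℂ (LinearMap.range (P : X →ₗ[ℂ] X)) ∧
        LinearMap.range (P : X →ₗ[ℂ] X) = LinearMap.ker ((T - l • 1 : X →L[ℂ] X) : X →ₗ[ℂ] X) ∧
        T ∘L P = l • P ∧ P ∘L T = l • P := by
  set S : X →L[ℂ] X := T - l • 1
  rw [toLinearMap_pow, Module.End.ker_sq_eq_ker_iff_disjoint_ker_range]
  constructor
  · intro hdisj
    obtain ⟨p, -, -, hdesc⟩ := hchain
    rw [toLinearMap_pow, toLinearMap_pow] at hdesc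
    have hcompl := Module.End.isCompl_ker_range_of_disjoint hdisj hdesc.le
    have htop : IsTopCompl (ker (S : X →ₗ[ℂ] X)) (range (S : X →ₗ[ℂ] X)) :=
      (hcompl.symm.isTopCompl_of_isClosed_of_finiteDimensional hclosed).symm
    have hrange := range_projectionL htop
    refine ⟨_, isIdempotentElem_projectionL htop, by rwa [hrange], hrange,
      comp_eq_smul_iff_range_le_ker_sub_smul_one.mpr hrange.le,
      comp_eq_smul_iff_range_sub_smul_one_le_ker.mpr (ker_projectionL htop).ge⟩
  · rintro ⟨P, hidem, -, hrange, -, hPT⟩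
    have hdisj :=
      (LinearMap.IsIdempotentElem.isCompl (isIdempotentElem_toLinearMap_iff.mpr hidem)).disjoint
    rw [hrange] at hdisj
    exact hdisj.mono_right (comp_eq_smul_iff_range_sub_smul_one_le_ker.mp hPT)

/-- Let `λ` be an eigenvalue of `T` such that `T - λI` is a Browder
operator (closed range, equal finite nullity and deficiency, finite equal ascent and
descent).  Then `T - λI` has ascent one iff there is a finite-rank continuous projection
`P` with range `ker (T - λI)` satisfying `T ∘ P = P ∘ T = λ P`. -/
theorem ascent_one_iff_projection
    {X : Type*} [NormedAddCommGroup X] [NormedSpace ℂ X] [CompleteSpace X]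
    (T : X →L[ℂ] X) (l : ℂ)
    (heig : LinearMap.ker ((T - l • 1 : X →L[ℂ] X) : X →ₗ[ℂ] X) ≠ ⊥)
    (hclosed : IsClosed (LinearMap.range ((T - l • 1 : X →L[ℂ] X) : X →ₗ[ℂ] X) : Set X))
    (hfin : FiniteDimensional ℂ (LinearMap.ker ((T - l • 1 : X →L[ℂ] X) : X →ₗ[ℂ] X)))
    (hfin' : FiniteDimensional ℂ (LinearMap.ker ((dualOp T - l • 1 : StrongDual ℂ X →L[ℂ] StrongDual ℂ X) :
        StrongDual ℂ X →ₗ[ℂ] StrongDual ℂ X)))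
    (hdim : Module.finrank ℂ (LinearMap.ker ((T - l • 1 : X →L[ℂ] X) : X →ₗ[ℂ] X)) =
      Module.finrank ℂ (LinearMap.ker ((dualOp T - l • 1 : StrongDual ℂ X →L[ℂ] StrongDual ℂ X) :
        StrongDual ℂ X →ₗ[ℂ] StrongDual ℂ X)))
    (hchain : ∃ p : ℕ, 0 < p ∧
      LinearMap.ker (((T - l • 1) ^ p : X →L[ℂ] X) : X →ₗ[ℂ] X) = LinearMap.ker (((T - l • 1) ^ (p + 1) : X →L[ℂ] X) : X →ₗ[ℂ] X) ∧
      LinearMap.range (((T - l • 1) ^ p : X →L[ℂ] X) : X →ₗ[ℂ] X) = LinearMap.range (((T - l • 1) ^ (p + 1) : X →L[ℂ] X) : X →ₗ[ℂ] X)) :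
    LinearMap.ker (((T - l • 1) ^ 2 : X →L[ℂ] X) : X →ₗ[ℂ] X) = LinearMap.ker ((T - l • 1 : X →L[ℂ] X) : X →ₗ[ℂ] X) ↔
      ∃ P : X →L[ℂ] X, P ∘L P = P ∧ FiniteDimensional ℂ (LinearMap.range (P : X →ₗ[ℂ] X)) ∧
        LinearMap.range (P : X →ₗ[ℂ] X) = LinearMap.ker ((T - l • 1 : X →L[ℂ] X) : X →ₗ[ℂ] X) ∧
        T ∘L P = l • P ∧ P ∘L T = l • P :=
  ascent_one_iff_projection_general T l hclosed hfin hchain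
end
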